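/- arXiv:1107.3237 — 2 statements merged into one kernel-verified Lean document; each statement's English description precedes it below -/
import Mathlib

section
/- The doubly weighted Bollobás–Riordan polynomial of a ribbon graph G is a rescaled multivariable dichromatic polynomial: BR_G(X,Y,Z) = (Π_{e∈E(G)} y_e) (YZ)^{−v(G)} X^{−k(G)} · Z_G(XYZ², {x_e Y Z / y_e}, Z^{−1}), where v(G) = |V(G)| and k(G) is the number of connected components of G. -/
/-!
An abstract combinatorial model of *arrow ribbon graphs* (Bradford, Butler,
Chmutov, "Arrow ribbon graphs").  A ribbon graph is a surface with boundary
decomposed into vertex-discs and edge-ribbons; an arrow ribbon graph carries in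
addition a finite set of directed arrows on the boundary arcs of its discs.
We record the combinatorial data of such a graph with edge set `E`:
* `kdual D F` is the number of connected components of the spanning subgraph
  with edge set `F` of the partial dual `G^D` (so `kdual ∅ F` is the number of
  connected components `k(F)` of the spanning subgraph `F` of `G` itself);
* `boundary F` is the multiset of boundary components of the spanning subgraph
  `F` of `G`, each boundary circle recorded as the cyclic word (a list, read
  along the circle) of the directions of the arrows lying on it.
Under partial duality the boundary of the spanning subgraph `F` of `G^D` is the
boundary of `F ∆ D` in `G`, with the same arrows, and the components count is
`kdual (D ∆ D') F` for the iterated dual; this makes partial duality, deletion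
and (via `G/e := G^{e} − e`) contraction definable on this data.
-/

open scoped symmDiff

/-- One letter of a boundary arrow word acts on `ℤ` as a reflection (the two
directions of arrows giving the two reflections `x ↦ -x` and `x ↦ 1 - x`
generating the infinite dihedral group).  `arrowStep (s, t) ℓ` composes the
affine map `x ↦ s·x + t` with the reflection of the letter `ℓ`. -/
def arrowStep (p : ℤ × ℤ) (ℓ : Bool) : ℤ × ℤ :=
  (-p.1, p.1 * (if ℓ then 0 else 1) + p.2)

/-- The number of arrows remaining on a boundary circle, encoded by the cyclic
word `w` of the directions of the arrows along it, after recursively cancelling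
all neighbouring pairs of arrows pointing in the same direction: an odd word
cyclically reduces to a single arrow, and an even word reduces to an
alternating word of length `2|t|`, where `t` is the translation part of the
product of the reflections of its letters.  The paper's index `i(f)` equals
half of this number; accordingly we index the formal variables `K` by the
doubled index, so `K n` stands for the paper's `K_{n/2}`, and `K 0 = 1`. -/
def reducedArrowCount (w : List Bool) : ℕ :=
  if w.length % 2 = 1 then 1 else 2 * (w.foldl arrowStep (1, 0)).2.natAbs

/-- Abstract combinatorial model of an arrow ribbon graph with edge set `E`. -/
structure ArrowRibbonGraph (E : Type) [DecidableEq E] : Type where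
  /-- `kdual D F` = number of connected components of the spanning subgraph `F`
  of the partial dual `G^D`. -/
  kdual : Finset E → Finset E → ℕ
  /-- `boundary F` = the boundary components of the spanning subgraph `F`,
  each recorded as the cyclic word of directions of the arrows on it. -/
  boundary : Finset E → Multiset (List Bool)

namespace ArrowRibbonGraph

variable {E : Type} [DecidableEq E]

/-- `k(F)`: the number of connected components of the spanning subgraph `F`. -/
def k (G : ArrowRibbonGraph E) (F : Finset E) : ℕ := G.kdual ∅ F

/-- `bc(F)`: the number of boundary components of the spanning subgraph `F`. -/
def bc (G : ArrowRibbonGraph E) (F : Finset E) : ℕ := (G.boundary F).card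

/-- The monomial `∏_{f ∈ ∂F} K_{i(f)}` over the boundary components of the
spanning subgraph `F` (with `K` indexed by the doubled index `2·i(f)`). -/
def arrowMonomial {R : Type} [CommRing R] (G : ArrowRibbonGraph E)
    (K : ℕ → R) (F : Finset E) : R :=
  ((G.boundary F).map fun w => K (reducedArrowCount w)).prod

/-- The partial dual `G^D` of `G` with respect to a subset `D` of edges. -/
def pdual (G : ArrowRibbonGraph E) (D : Finset E) : ArrowRibbonGraph E where
  kdual D' F := G.kdual (D ∆ D') F
  boundary F := G.boundary (F ∆ D)

/-- Deletion `G − e` of the edge `e`: the edge-ribbon `e` is removed, spanning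
subgraphs of `G − e` being exactly the spanning subgraphs of `G` avoiding `e`
(with the same components, boundary and arrows; the arrows of `e` lying on its
attaching arcs persist on the corresponding free vertex arcs). -/
def delete (G : ArrowRibbonGraph E) (e : E) : ArrowRibbonGraph {x // x ≠ e} where
  kdual D F := G.kdual (D.map (Function.Embedding.subtype _))
    (F.map (Function.Embedding.subtype _))
  boundary F := G.boundary (F.map (Function.Embedding.subtype _))

/-- Contraction, defined via partial duality: `G/e := G^{{e}} − e`. -/
def contract (G : ArrowRibbonGraph E) (e : E) : ArrowRibbonGraph {x // x ≠ e} :=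
  (G.pdual {e}).delete e

/-- The arrow dichromatic polynomial
`A_G(a,b,c,K) = ∑_{F ⊆ E(G)} a^{k(F)} (∏_{e∈F} b_e) c^{bc(F)} ∏_{f∈∂F} K_{i(f)}`. -/
def arrowDichromatic [Fintype E] (G : ArrowRibbonGraph E) {R : Type} [CommRing R]
    (a c : R) (b : E → R) (K : ℕ → R) : R :=
  ∑ F : Finset E, a ^ G.k F * (∏ e ∈ F, b e) * c ^ G.bc F * G.arrowMonomial K F

end ArrowRibbonGraph

open ArrowRibbonGraph

namespace ArrowRibbonGraph

variable {E : Type} [DecidableEq E]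

/-- `v(G)`, the number of vertex-discs of `G`: each vertex-disc contributes one
boundary circle to the edgeless spanning subgraph, so `v(G) = bc(∅)`. -/
def verts (G : ArrowRibbonGraph E) : ℕ := G.bc ∅

/-- `k(G)`, the number of connected components of the ribbon graph `G`. -/
def components [Fintype E] (G : ArrowRibbonGraph E) : ℕ := G.k Finset.univ

/-- The rank `r(F) := |V(G)| − k(F)` of a spanning subgraph. -/
def rk (G : ArrowRibbonGraph E) (F : Finset E) : ℤ := (G.verts : ℤ) - G.k F

/-- The nullity `n(F) := |F| − r(F)` of a spanning subgraph. -/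
def nl (G : ArrowRibbonGraph E) (F : Finset E) : ℤ := (F.card : ℤ) - G.rk F

/-- The multivariable dichromatic polynomial of a ribbon graph
`Z_G(a,b,c) = ∑_{F ⊆ E(G)} a^{k(F)} (∏_{e∈F} b_e) c^{bc(F)}`. -/
def dichromatic [Fintype E] (G : ArrowRibbonGraph E) {R : Type} [CommRing R]
    (a c : R) (b : E → R) : R :=
  ∑ F : Finset E, a ^ G.k F * (∏ e ∈ F, b e) * c ^ G.bc F

/-- The doubly weighted Bollobás–Riordan polynomial
`BR_G(X,Y,Z) = ∑_{F ⊆ E(G)} (∏_{e∈F} x_e)(∏_{e∉F} y_e)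
X^{r(G)−r(F)} Y^{n(F)} Z^{k(F)−bc(F)+n(F)}`. -/
def BR [Fintype E] (G : ArrowRibbonGraph E) {R : Type} [Field R]
    (x y : E → R) (X Y Z : R) : R :=
  ∑ F : Finset E,
    (∏ e ∈ F, x e) * (∏ e ∈ Fᶜ, y e) *
      X ^ (G.rk Finset.univ - G.rk F) * Y ^ G.nl F *
      Z ^ ((G.k F : ℤ) - (G.bc F : ℤ) + G.nl F)

end ArrowRibbonGraph

/-! Term by term: since `r(F) = v − k(F)` and `n(F) = |F| − v + k(F)`, the Bollobás–Riordan
monomial of `F` is `(YZ)^{−v} X^{−k(G)} (XYZ²)^{k(F)} (YZ)^{|F|} Z^{−bc(F)}`; the factor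
`(YZ)^{|F|}` is absorbed by the edge weights `x_e Y Z / y_e`, whose denominators turn
`∏_{e ∈ E(G)} y_e` into `∏_{e ∉ F} y_e`. -/

theorem Finset.prod_mul_const_div {ι R : Type} [DivisionCommMonoid R]
    (s : Finset ι) (x y : ι → R) (c : R) :
    ∏ i ∈ s, x i * c / y i = (∏ i ∈ s, x i) * c ^ s.card / ∏ i ∈ s, y i := by
  rw [Finset.prod_div_distrib, Finset.prod_mul_distrib, Finset.prod_const]

theorem BR_monomial_eq_rescaled {R : Type} [Field R] {X Y Z : R}
    (hX : X ≠ 0) (hY : Y ≠ 0) (hZ : Z ≠ 0) (v kG kF bc n : ℕ) :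
    X ^ (((v : ℤ) - kG) - ((v : ℤ) - kF)) * Y ^ ((n : ℤ) - ((v : ℤ) - kF)) *
        Z ^ ((kF : ℤ) - bc + ((n : ℤ) - ((v : ℤ) - kF))) =
      (Y * Z) ^ (-(v : ℤ)) * X ^ (-(kG : ℤ)) *
        ((X * Y * Z ^ 2) ^ kF * (Y * Z) ^ n * Z⁻¹ ^ bc) := by
  simp only [sub_eq_add_neg, neg_add, neg_neg, zpow_add₀ hX, zpow_add₀ hY, zpow_add₀ hZ,
    zpow_neg, zpow_natCast, inv_pow]
  field_simp
  ring

/-- The doubly weighted Bollobás–Riordan polynomial is a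
rescaled multivariable dichromatic polynomial:
`BR_G(X,Y,Z) = (∏_{e∈E(G)} y_e) (YZ)^{−v(G)} X^{−k(G)} ·
Z_G(XYZ², {x_e Y Z / y_e}, Z^{−1})`. -/
theorem BR_eq_dichromatic
    {E : Type} [DecidableEq E] [Fintype E] {R : Type} [Field R]
    (G : ArrowRibbonGraph E) (x y : E → R) (X Y Z : R)
    (hX : X ≠ 0) (hY : Y ≠ 0) (hZ : Z ≠ 0) (hy : ∀ e, y e ≠ 0) :
    G.BR x y X Y Z =
      (∏ e, y e) * (Y * Z) ^ (-(G.verts : ℤ)) * X ^ (-(G.components : ℤ)) *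
        G.dichromatic (X * Y * Z ^ 2) Z⁻¹ (fun e => x e * Y * Z / y e) := by
  rw [BR, dichromatic, Finset.mul_sum]
  refine Finset.sum_congr rfl fun F _ => ?_
  have hyF : ∏ e ∈ F, y e ≠ 0 := Finset.prod_ne_zero_iff.mpr fun e _ => hy e
  have hweights : ∏ e ∈ F, x e * Y * Z / y e =
      (∏ e ∈ F, x e) * (Y * Z) ^ F.card / ∏ e ∈ F, y e := by
    simp only [mul_assoc, ← Finset.prod_mul_const_div]
  rw [hweights, rk, rk, nl, rk, components, ← Finset.prod_mul_prod_compl F y]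
  field_simp
  linear_combination ((∏ e ∈ F, x e) * ∏ e ∈ Fᶜ, y e) *
    BR_monomial_eq_rescaled hX hY hZ G.verts (G.k Finset.univ) (G.k F) (G.bc F) F.card
end

section
/- Arrow Thistlethwaite theorem: let L be a virtual link diagram and let G_L^s be the signed arrow ribbon graph corresponding to a state s of L, with e_− negative edges and e_+ positive edges. Then the arrow bracket polynomial of L is a specialization of the arrow dichromatic polynomial of G_L^s: ⟨L⟩_A(A,B,d) = (A^{e_+} B^{e_−} / d) · A_{G_L^s}(1, b, d, K), where the edge weights are b_e = B/A if e is positive and b_e = A/B if e is negative. -/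
/-!
An abstract combinatorial model of *arrow ribbon graphs* (Bradford, Butler,
Chmutov, "Arrow ribbon graphs").  A ribbon graph is a surface with boundary
decomposed into vertex-discs and edge-ribbons; an arrow ribbon graph carries in
addition a finite set of directed arrows on the boundary arcs of its discs.
We record the combinatorial data of such a graph with edge set `E`:
* `kdual D F` is the number of connected components of the spanning subgraph
  with edge set `F` of the partial dual `G^D` (so `kdual ∅ F` is the number of
  connected components `k(F)` of the spanning subgraph `F` of `G` itself);
* `boundary F` is the multiset of boundary components of the spanning subgraph
  `F` of `G`, each boundary circle recorded as the cyclic word (a list, read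
  along the circle) of the directions of the arrows lying on it.
Under partial duality the boundary of the spanning subgraph `F` of `G^D` is the
boundary of `F ∆ D` in `G`, with the same arrows, and the components count is
`kdual (D ∆ D') F` for the iterated dual; this makes partial duality, deletion
and (via `G/e := G^{e} − e`) contraction definable on this data.
-/

open scoped symmDiff

open ArrowRibbonGraph

/-- An abstract model of (the state-sum data of) a virtual link diagram with
set of classical crossings `X`.  A *state* is a function `X → Bool`, assigning
`true` to the crossings that are `A`-split and `false` to those that are
`B`-split.
* `circles s` is the multiset of state circles of the state `s`, each recorded
  as the cyclic word of the directions of the arrows placed on it (two arrows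
  are placed at every splitting that does not respect the orientation of the
  strands, directed counterclockwise near the crossing);
* `respects x v` records whether the splitting of the crossing `x` prescribed
  by `v` respects the orientation of the strands;
* `kstate s D F` is the number of connected components of the spanning
  subgraph `F` of the partial dual `(G_L^s)^D` of the arrow ribbon graph
  `G_L^s` associated to the state `s`. -/
structure VirtualLinkDiagram (X : Type) [DecidableEq X] [Fintype X] : Type where
  circles : (X → Bool) → Multiset (List Bool)
  respects : X → Bool → Bool
  kstate : (X → Bool) → Finset X → Finset X → ℕ

namespace VirtualLinkDiagram

variable {X : Type} [DecidableEq X] [Fintype X]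

/-- The state obtained from `s` by switching the splitting at each crossing
of `F`. -/
def flipState (s : X → Bool) (F : Finset X) : X → Bool :=
  fun x => if x ∈ F then !(s x) else s x

/-- The signed arrow ribbon graph `G_L^s` of the state `s` of `L`: its vertices
are discs glued to the state circles of `s` and its edges correspond to the
classical crossings (an edge being positive iff its crossing is `A`-split in
`s`, i.e. iff `s x = true`).  The boundary components of the spanning subgraph
`F` are exactly the state circles (with their arrows) of the state differing
from `s` precisely at the crossings of `F`. -/
def toGraph (L : VirtualLinkDiagram X) (s : X → Bool) : ArrowRibbonGraph X where
  kdual D F := L.kstate s D F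
  boundary F := L.circles (flipState s F)

/-- `α(s)`: the number of `A`-splittings of the state `s`. -/
def alphaCount (s : X → Bool) : ℕ := (Finset.univ.filter fun x => s x = true).card

/-- `β(s)`: the number of `B`-splittings of the state `s`. -/
def betaCount (s : X → Bool) : ℕ := (Finset.univ.filter fun x => s x = false).card

/-- `δ(s)`: the number of state circles of the state `s`. -/
def delta (L : VirtualLinkDiagram X) (s : X → Bool) : ℕ := (L.circles s).card

/-- The arrow bracket polynomial
`⟨L⟩_A(A,B,d) = ∑_{s∈S(L)} A^{α(s)} B^{β(s)} d^{δ(s)−1} ∏_{c∈s} K_c`. -/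
def arrowBracket (L : VirtualLinkDiagram X) {R : Type} [Field R]
    (A B d : R) (K : ℕ → R) : R :=
  ∑ s : X → Bool,
    A ^ alphaCount s * B ^ betaCount s * d ^ ((L.delta s : ℤ) - 1) *
      ((L.circles s).map fun w => K (reducedArrowCount w)).prod

end VirtualLinkDiagram

open VirtualLinkDiagram

/-- Arrow Thistlethwaite theorem.  Let `L` be a virtual link
diagram and `G_L^s` the signed arrow ribbon graph of a state `s` of `L`, with
`e₊ = α(s)` positive and `e₋ = β(s)` negative edges.  Then the arrow bracket
polynomial of `L` is a specialization of the arrow dichromatic polynomial of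
`G_L^s`: `⟨L⟩_A(A,B,d) = (A^{e₊} B^{e₋} / d) · A_{G_L^s}(1, b, d, K)`, where
`b_e = B/A` for positive edges and `b_e = A/B` for negative edges. -/
theorem arrow_thistlethwaite {X : Type} [DecidableEq X] [Fintype X]
    (L : VirtualLinkDiagram X) (s : X → Bool)
    {R : Type} [Field R] (A B d : R) (hA : A ≠ 0) (hB : B ≠ 0) (hd : d ≠ 0)
    (K : ℕ → R) (hK : K 0 = 1) :
    L.arrowBracket A B d K =
      A ^ alphaCount s * B ^ betaCount s / d *
        (L.toGraph s).arrowDichromatic 1 d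
          (fun x => if s x = true then B / A else A / B) K := by
  classical
  -- The bijection between spanning subgraphs `F` and states `flipState s F`.
  let e : Finset X ≃ (X → Bool) :=
    { toFun := fun F => flipState s F
      invFun := fun t => Finset.univ.filter (fun x => t x ≠ s x)
      left_inv := by
        intro F
        ext x
        by_cases hx : x ∈ F <;> simp [flipState, hx]
      right_inv := by
        intro t
        funext x
        cases hts : t x <;> cases hs : s x <;> simp [flipState, hts, hs] }
  have hAB : ∀ t : X → Bool,
      A ^ alphaCount t * B ^ betaCount t = ∏ x : X, (if t x then A else B) := by
    intro t
    rw [Finset.prod_ite, Finset.prod_const, Finset.prod_const]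
    simp [alphaCount, betaCount]
  have hprod : ∀ F : Finset X,
      A ^ alphaCount (flipState s F) * B ^ betaCount (flipState s F) =
        A ^ alphaCount s * B ^ betaCount s *
          ∏ x ∈ F, (if s x = true then B / A else A / B) := by
    intro F
    rw [hAB, hAB]
    have : ∀ x : X, (if flipState s F x then A else B) =
        (if s x then A else B) * (if x ∈ F then (if s x = true then B / A else A / B) else 1) := by
      intro x
      by_cases hx : x ∈ F
      · cases hs : s x <;> simp [flipState, hx, hs] <;> field_simp
      · simp [flipState, hx]
    rw [Finset.prod_congr rfl (fun x _ => this x), Finset.prod_mul_distrib]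
    congr 1
    rw [Finset.prod_ite_mem, Finset.univ_inter]
  rw [VirtualLinkDiagram.arrowBracket, ArrowRibbonGraph.arrowDichromatic, Finset.mul_sum]
  refine (Fintype.sum_equiv e _ _ ?_).symm
  intro F
  show A ^ alphaCount s * B ^ betaCount s / d *
      (1 ^ (L.toGraph s).k F * (∏ x ∈ F, (if s x = true then B / A else A / B)) *
        d ^ (L.toGraph s).bc F * (L.toGraph s).arrowMonomial K F) =
    A ^ alphaCount (flipState s F) * B ^ betaCount (flipState s F) *
      d ^ ((L.delta (flipState s F) : ℤ) - 1) *
      ((L.circles (flipState s F)).map fun w => K (reducedArrowCount w)).prod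
  have hbc : (L.toGraph s).bc F = L.delta (flipState s F) := rfl
  have hmon : (L.toGraph s).arrowMonomial K F =
      ((L.circles (flipState s F)).map fun w => K (reducedArrowCount w)).prod := rfl
  rw [hbc, hmon, hprod F, one_pow,
    zpow_sub₀ hd, zpow_natCast, zpow_one]
  field_simp
end
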